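/- arXiv:1905.02939 — 8 statements merged into one kernel-verified Lean document; each statement's English description precedes it below -/
import Mathlib

section
/- For the reversible (SEO) parallel tempering index process on {0,...,N} with i.i.d. direction variables and swap success probabilities s_1,...,s_N (with r_i = 1 - s_i), the expected round trip time satisfies E[T] = 2N(N+1) + 2(N+1) * sum_{i=1}^N r_i/s_i. -/
/-!
Write `sᵢ (a_{i-1} - a_i)` for the flux of a hitting-time vector `a` across the bond between
levels `i - 1` and `i`. The interior equations say that the flux grows by exactly `2` from one
bond to the next, and the reflecting boundary fixes it to `2` at the reflecting end. Hence the
upward hitting times have flux `2i` across bond `i`, and, by the reflection `i ↦ N - i`, the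
downward ones have flux `2(N + 1 - i)`. Telescoping, bond `i` contributes
`(2i + 2(N + 1 - i)) / sᵢ = 2(N + 1) / sᵢ` to the round trip.
-/

open Finset

theorem Finset.sum_Icc_one_sub_pred {G : Type*} [AddCommGroup G] (a : ℕ → G) (n : ℕ) :
    ∑ i ∈ Icc 1 n, (a (i - 1) - a i) = a 0 - a n := by
  induction n with
  | zero => simp
  | succ n ih =>
    rw [sum_Icc_succ_top (by omega), ih, Nat.add_sub_cancel]
    abel

def SEOInteriorEq (N : ℕ) (s a : ℕ → ℝ) : Prop :=
  ∀ i, 1 ≤ i → i ≤ N - 1 →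
    a i = (1/2) * s (i+1) * (a (i+1) + 1) + (1/2) * s i * (a (i-1) + 1)
      + (1/2) * ((1 - s (i+1)) + (1 - s i)) * (a i + 1)

namespace SEOInteriorEq

variable {N : ℕ} {s a : ℕ → ℝ}

theorem flux_succ (h : SEOInteriorEq N s a) {i : ℕ} (hi : 1 ≤ i) (hiN : i ≤ N - 1) :
    s (i+1) * (a i - a (i+1)) = s i * (a (i-1) - a i) + 2 := by
  linear_combination 2 * h i hi hiN

theorem reflect (h : SEOInteriorEq N s a) :
    SEOInteriorEq N (fun j => s (N + 1 - j)) (fun j => a (N - j)) := by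
  intro j hj hjN
  have hi := h (N - j) (by omega) (by omega)
  rw [show N - j + 1 = N + 1 - j by omega, show N - j - 1 = N - (j + 1) by omega] at hi
  simp only [show N + 1 - (j + 1) = N - j by omega, show N - (j - 1) = N + 1 - j by omega]
  linear_combination hi

theorem up_flux (h : SEOInteriorEq N s a)
    (h0 : a 0 = (1/2) * s 1 * (a 1 + 1) + (1 - (1/2) * s 1) * (a 0 + 1))
    {i : ℕ} (hi : 1 ≤ i) (hiN : i ≤ N) :
    s i * (a (i-1) - a i) = 2 * i := by
  induction i, hi using Nat.le_induction with
  | base => linear_combination 2 * h0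
  | succ i hi ih =>
    rw [Nat.add_sub_cancel, h.flux_succ hi (by omega), ih (by omega)]
    push_cast
    ring

theorem down_flux (h : SEOInteriorEq N s a)
    (hN : a N = (1/2) * s N * (a (N-1) + 1) + (1 - (1/2) * s N) * (a N + 1))
    {i : ℕ} (hi : 1 ≤ i) (hiN : i ≤ N) :
    s i * (a i - a (i-1)) = 2 * ((N + 1 : ℝ) - i) := by
  have hN' : a (N - 0) = (1/2) * s (N + 1 - 1) * (a (N - 1) + 1)
      + (1 - (1/2) * s (N + 1 - 1)) * (a (N - 0) + 1) := by
    simpa only [Nat.sub_zero, Nat.add_sub_cancel] using hN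
  have := h.reflect.up_flux hN' (i := N + 1 - i) (by omega) (by omega)
  simp only [show N + 1 - (N + 1 - i) = i by omega, show N - (N + 1 - i - 1) = i by omega,
    show N - (N + 1 - i) = i - 1 by omega, Nat.cast_sub (show i ≤ N + 1 by omega)] at this
  push_cast at this
  exact this

end SEOInteriorEq

theorem seo_round_trip_general (N : ℕ) (s : ℕ → ℝ)
    (hs : ∀ i, 1 ≤ i → i ≤ N → 0 < s i ∧ s i ≤ 1)
    (aUp aDown : ℕ → ℝ)
    (hUpInt : ∀ i, 1 ≤ i → i ≤ N - 1 →
      aUp i = (1/2) * s (i+1) * (aUp (i+1) + 1) + (1/2) * s i * (aUp (i-1) + 1)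
        + (1/2) * ((1 - s (i+1)) + (1 - s i)) * (aUp i + 1))
    (hUp0 : aUp 0 = (1/2) * s 1 * (aUp 1 + 1) + (1 - (1/2) * s 1) * (aUp 0 + 1))
    (hUpN : aUp N = 0)
    (hDownInt : ∀ i, 1 ≤ i → i ≤ N - 1 →
      aDown i = (1/2) * s (i+1) * (aDown (i+1) + 1) + (1/2) * s i * (aDown (i-1) + 1)
        + (1/2) * ((1 - s (i+1)) + (1 - s i)) * (aDown i + 1))
    (hDownN : aDown N = (1/2) * s N * (aDown (N-1) + 1) + (1 - (1/2) * s N) * (aDown N + 1))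
    (hDown0 : aDown 0 = 0) :
    aUp 0 + aDown N
      = 2 * N * (N + 1) + 2 * (N + 1) * ∑ i ∈ Finset.Icc 1 N, (1 - s i) / s i := by
  have bond : ∀ i ∈ Icc 1 N, (aUp (i-1) - aUp i) + (aDown i - aDown (i-1))
      = 2 * (N + 1) + 2 * (N + 1) * ((1 - s i) / s i) := by
    intro i hi
    rw [mem_Icc] at hi
    have hup := SEOInteriorEq.up_flux hUpInt hUp0 hi.1 hi.2
    have hdown := SEOInteriorEq.down_flux hDownInt hDownN hi.1 hi.2
    have hsi := (hs i hi.1 hi.2).1.ne'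
    field_simp
    linear_combination hup + hdown
  calc aUp 0 + aDown N = (aUp 0 - aUp N) - (aDown 0 - aDown N) := by rw [hUpN, hDown0]; ring
    _ = ∑ i ∈ Icc 1 N, ((aUp (i-1) - aUp i) + (aDown i - aDown (i-1))) := by
      rw [← sum_Icc_one_sub_pred, ← sum_Icc_one_sub_pred, ← sum_sub_distrib]
      exact sum_congr rfl fun i _ => by ring
    _ = _ := by
      rw [sum_congr rfl bond, sum_add_distrib, sum_const, Nat.card_Icc, ← mul_sum, nsmul_eq_mul]
      push_cast
      ring

/-- Expected round trip time for the reversible (SEO) parallel tempering index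
process: with swap probabilities `s 1, …, s N` (and `r i = 1 - s i`), if `aUp i`
denotes the expected hitting time of level `N` from level `i` and `aDown i` the
expected hitting time of level `0` from level `i` under the lazy SEO dynamics,
then `E[T] = aUp 0 + aDown N = 2N(N+1) + 2(N+1) ∑ r_i / s_i`. -/
theorem seo_round_trip (N : ℕ) (hN : 1 ≤ N) (s : ℕ → ℝ)
    (hs : ∀ i, 1 ≤ i → i ≤ N → 0 < s i ∧ s i ≤ 1)
    (aUp aDown : ℕ → ℝ)
    (hUpInt : ∀ i, 1 ≤ i → i ≤ N - 1 →
      aUp i = (1/2) * s (i+1) * (aUp (i+1) + 1) + (1/2) * s i * (aUp (i-1) + 1)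
        + (1/2) * ((1 - s (i+1)) + (1 - s i)) * (aUp i + 1))
    (hUp0 : aUp 0 = (1/2) * s 1 * (aUp 1 + 1) + (1 - (1/2) * s 1) * (aUp 0 + 1))
    (hUpN : aUp N = 0)
    (hDownInt : ∀ i, 1 ≤ i → i ≤ N - 1 →
      aDown i = (1/2) * s (i+1) * (aDown (i+1) + 1) + (1/2) * s i * (aDown (i-1) + 1)
        + (1/2) * ((1 - s (i+1)) + (1 - s i)) * (aDown i + 1))
    (hDownN : aDown N = (1/2) * s N * (aDown (N-1) + 1) + (1 - (1/2) * s N) * (aDown N + 1))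
    (hDown0 : aDown 0 = 0) :
    aUp 0 + aDown N
      = 2 * N * (N + 1) + 2 * (N + 1) * ∑ i ∈ Finset.Icc 1 N, (1 - s i) / s i :=
  seo_round_trip_general N s hs aUp aDown hUpInt hUp0 hUpN hDownInt hDownN hDown0
end

section
/- Let a^i (i = 0,...,N) satisfy the boundary condition a^0 satisfies a^0 = (1/2)s_1(a^1 + 1) + (1 - (1/2)s_1)(a^0 + 1), the interior recursion a^i = (1/2)s_{i+1}(a^{i+1}+1) + (1/2)s_i(a^{i-1}+1) + (1/2)(r_{i+1}+r_i)(a^i+1) for 1 ≤ i ≤ N-1 where r_j = 1 - s_j, and a^N = 0. Then a^0 = sum_{i=1}^N 2i/s_i. -/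
/-!
Since the transition probabilities in each equation sum to one, the equation is a conservation
law for the flux `s i * (a (i - 1) - a i)` across the edge `{i - 1, i}`: the boundary equation
gives flux `2` across `{0, 1}`, and each interior equation adds `2` from one edge to the next.
Hence `a (i - 1) - a i = 2 i / s i`, and the claim follows by telescoping from `a N = 0`.
-/

open Finset

theorem mul_sub_eq_of_lazy_step {p q x y z : ℝ}
    (h : y = p * (z + 1) + q * (x + 1) + (1 - p - q) * (y + 1)) :
    p * (y - z) = q * (x - y) + 1 := by
  linarith

theorem sum_Icc_one_sub_pred_sub (f : ℕ → ℝ) (n : ℕ) :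
    ∑ i ∈ Icc 1 n, (f (i - 1) - f i) = f 0 - f n := by
  induction n with
  | zero => simp
  | succ n ih =>
    rw [sum_Icc_succ_top (Nat.le_add_left 1 n), ih, Nat.add_sub_cancel]
    ring

theorem seo_flux_eq {N : ℕ} {s a : ℕ → ℝ}
    (h0 : a 0 = (1/2) * s 1 * (a 1 + 1) + (1 - (1/2) * s 1) * (a 0 + 1))
    (hInt : ∀ i, 1 ≤ i → i ≤ N - 1 →
      a i = (1/2) * s (i+1) * (a (i+1) + 1) + (1/2) * s i * (a (i-1) + 1)
        + (1/2) * ((1 - s (i+1)) + (1 - s i)) * (a i + 1))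
    {i : ℕ} (hi : 1 ≤ i) (hiN : i ≤ N) :
    s i * (a (i - 1) - a i) = 2 * i := by
  induction i, hi using Nat.le_induction with
  | base =>
    have step := mul_sub_eq_of_lazy_step (p := (1/2) * s 1) (q := 0) (x := 0) (y := a 0)
      (z := a 1) (by linear_combination h0)
    norm_num
    linarith
  | succ i hi ih =>
    have step := mul_sub_eq_of_lazy_step (p := (1/2) * s (i + 1)) (q := (1/2) * s i)
      (x := a (i - 1)) (y := a i) (z := a (i + 1)) (by linear_combination hInt i hi (by omega))
    rw [Nat.add_sub_cancel]
    push_cast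
    linarith [ih (by omega)]

theorem seo_hitting_time_general (N : ℕ) (s : ℕ → ℝ)
    (hs : ∀ i, 1 ≤ i → i ≤ N → 0 < s i ∧ s i ≤ 1)
    (a : ℕ → ℝ)
    (h0 : a 0 = (1/2) * s 1 * (a 1 + 1) + (1 - (1/2) * s 1) * (a 0 + 1))
    (hInt : ∀ i, 1 ≤ i → i ≤ N - 1 →
      a i = (1/2) * s (i+1) * (a (i+1) + 1) + (1/2) * s i * (a (i-1) + 1)
        + (1/2) * ((1 - s (i+1)) + (1 - s i)) * (a i + 1))
    (hN0 : a N = 0) :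
    a 0 = ∑ i ∈ Finset.Icc 1 N, 2 * (i : ℝ) / s i := by
  calc a 0 = a 0 - a N := by rw [hN0, sub_zero]
    _ = ∑ i ∈ Icc 1 N, (a (i - 1) - a i) := (sum_Icc_one_sub_pred_sub a N).symm
    _ = ∑ i ∈ Icc 1 N, 2 * (i : ℝ) / s i := sum_congr rfl fun i hi => by
      obtain ⟨h1, hiN⟩ := mem_Icc.1 hi
      rw [eq_div_iff (hs i h1 hiN).1.ne', mul_comm, seo_flux_eq h0 hInt h1 hiN]

/-- Expected hitting time of level `N` for the lazy SEO random walk on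
`{0, …, N}`: if `a i` satisfies the boundary equation at `0`, the interior
recursion, and `a N = 0`, then `a 0 = ∑_{i=1}^N 2 i / s i`. -/
theorem seo_hitting_time (N : ℕ) (hN : 1 ≤ N) (s : ℕ → ℝ)
    (hs : ∀ i, 1 ≤ i → i ≤ N → 0 < s i ∧ s i ≤ 1)
    (a : ℕ → ℝ)
    (h0 : a 0 = (1/2) * s 1 * (a 1 + 1) + (1 - (1/2) * s 1) * (a 0 + 1))
    (hInt : ∀ i, 1 ≤ i → i ≤ N - 1 →
      a i = (1/2) * s (i+1) * (a (i+1) + 1) + (1/2) * s i * (a (i-1) + 1)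
        + (1/2) * ((1 - s (i+1)) + (1 - s i)) * (a i + 1))
    (hN0 : a N = 0) :
    a 0 = ∑ i ∈ Finset.Icc 1 N, 2 * (i : ℝ) / s i :=
  seo_hitting_time_general N s hs a h0 hInt hN0
end

section
/- Suppose that the absolute value of V is integrable with respect to both π_0 and π. Then there exists a constant C > 0 such that for all β ∈ [0,1] and δ ≥ 0 with β + δ ≤ 1, |s(β, β+δ) - 1| ≤ C δ, where s(β,β') = E[exp(min{0, (β'-β)(V^{(β')} - V^{(β)})})] with V^{(β)}, V^{(β')} independent with laws equal to the pushforward of π^{(β)}, π^{(β')} under V. -/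
/-!
Since `0 ≤ 1 - exp (min 0 t) ≤ |t|`, integrating over the product of the two laws gives
`|s(β, β + δ) - 1| ≤ δ (𝔼_{π^{(β)}} |V| + 𝔼_{π^{(β+δ)}} |V|)`, so it suffices to bound the first
absolute moment of `V` uniformly along the annealing path. The annealed measures are the
exponential tilts of `π₀` by `-βV`: their unnormalised densities satisfy
`exp (-βV) ≤ 1 + exp (-V)`, and Jensen gives `Z(β) ≥ exp (-|𝔼_{π₀} V|)`, so the moment is at most
`(𝔼_{π₀} |V| + 𝔼_{π₀} |V exp (-V)|) exp |𝔼_{π₀} V|`, which is finite because `V` is integrable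
under both `π₀` and `π`.
-/

open MeasureTheory Real Set

lemma abs_exp_min_zero_sub_one_le (t : ℝ) : |exp (min 0 t) - 1| ≤ |t| := by
  have hle : exp (min 0 t) ≤ 1 := exp_le_one_iff.mpr (min_le_left 0 t)
  have hge : min 0 t + 1 ≤ exp (min 0 t) := add_one_le_exp _
  have hmin : -|t| ≤ min 0 t := le_min (neg_nonpos.mpr (abs_nonneg t)) (neg_abs_le t)
  rw [abs_sub_comm, abs_of_nonneg (sub_nonneg.mpr hle)]
  linarith

section

variable {X : Type*} [MeasurableSpace X] {μ ν : Measure X} {V : X → ℝ} {β : ℝ}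

lemma abs_integral_integral_exp_min_sub_one_le [IsProbabilityMeasure μ] [IsProbabilityMeasure ν]
    (hV : Measurable V) (hVμ : Integrable V μ) (hVν : Integrable V ν) (t : ℝ) :
    |∫ x, ∫ y, exp (min 0 (t * (V y - V x))) ∂ν ∂μ - 1| ≤
      |t| * (∫ x, |V x| ∂μ + ∫ y, |V y| ∂ν) := by
  set F : X × X → ℝ := fun z => exp (min 0 (t * (V z.2 - V z.1)))
  have hF : Integrable F (μ.prod ν) := by
    refine (integrable_const (1 : ℝ)).mono' (by fun_prop) (.of_forall fun z => ?_)
    rw [norm_of_nonneg (exp_nonneg _)]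
    exact exp_le_one_iff.mpr (min_le_left _ _)
  have hG : Integrable (fun z : X × X => |t| * (|V z.1| + |V z.2|)) (μ.prod ν) :=
    ((hVμ.abs.comp_fst ν).add (hVν.abs.comp_snd μ)).const_mul |t|
  calc |∫ x, ∫ y, F (x, y) ∂ν ∂μ - 1|
      = |∫ z, (F z - 1) ∂μ.prod ν| := by
        rw [integral_sub hF (integrable_const 1), integral_prod F hF]
        simp
    _ ≤ ∫ z, |F z - 1| ∂μ.prod ν := abs_integral_le_integral_abs
    _ ≤ ∫ z, |t| * (|V z.1| + |V z.2|) ∂μ.prod ν := by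
        refine integral_mono (hF.sub (integrable_const 1)).abs hG fun z => ?_
        calc |F z - 1| ≤ |t * (V z.2 - V z.1)| := abs_exp_min_zero_sub_one_le _
          _ ≤ |t| * (|V z.1| + |V z.2|) := by
            rw [abs_mul, add_comm]
            exact mul_le_mul_of_nonneg_left (abs_sub _ _) (abs_nonneg t)
    _ = |t| * (∫ x, |V x| ∂μ + ∫ y, |V y| ∂ν) := by
        rw [integral_const_mul, integral_add (hVμ.abs.comp_fst ν) (hVν.abs.comp_snd μ),
          integral_fun_fst (fun x => |V x|), integral_fun_snd (fun y => |V y|)]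
        simp

lemma exp_integral_le_integral_exp [IsProbabilityMeasure μ] {f : X → ℝ} (hf : Integrable f μ)
    (hexp : Integrable (fun x => exp (f x)) μ) : exp (∫ x, f x ∂μ) ≤ ∫ x, exp (f x) ∂μ :=
  convexOn_exp.map_integral_le continuous_exp.continuousOn isClosed_univ
    (.of_forall fun _ => mem_univ _) hf hexp

lemma abs_exp_neg_mul_mul_le (hβ : β ∈ Icc (0 : ℝ) 1) (v : ℝ) :
    |exp (-β * v) * v| ≤ |v| + |exp (-v) * v| := by
  have hexp : exp (-β * v) ≤ 1 + exp (-v) := by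
    rcases le_total 0 v with hv | hv
    · have : exp (-β * v) ≤ 1 := exp_le_one_iff.mpr (by nlinarith [hβ.1])
      linarith [exp_pos (-v)]
    · have : exp (-β * v) ≤ exp (-v) := exp_le_exp.mpr (by nlinarith [hβ.2])
      linarith
  simp only [abs_mul, abs_of_pos (exp_pos _)]
  nlinarith [abs_nonneg v]

lemma integrable_exp_neg_mul_mul (hV0 : Integrable V μ)
    (hV1 : Integrable (fun x => exp (-V x) * V x) μ) (hβ : β ∈ Icc (0 : ℝ) 1) :
    Integrable (fun x => exp (-β * V x) * V x) μ :=
  (hV0.abs.add hV1.abs).mono' (by fun_prop) (.of_forall fun x => abs_exp_neg_mul_mul_le hβ (V x))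

lemma integral_abs_tilted_neg_mul_le [IsProbabilityMeasure μ] (hV0 : Integrable V μ)
    (hV1 : Integrable (fun x => exp (-V x) * V x) μ) (hβ : β ∈ Icc (0 : ℝ) 1)
    (hexp : Integrable (fun x => exp (-β * V x)) μ) :
    ∫ x, |V x| ∂μ.tilted (fun x => -β * V x) ≤
      (∫ x, |V x| + |exp (-V x) * V x| ∂μ) * exp |∫ x, V x ∂μ| := by
  set m := ∫ x, V x ∂μ
  set Z := ∫ x, exp (-β * V x) ∂μ
  have hZ : exp (-|m|) ≤ Z := by
    calc exp (-|m|) ≤ exp (∫ x, -β * V x ∂μ) := by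
          rw [integral_const_mul]
          gcongr
          nlinarith [le_abs_self m, neg_abs_le m, hβ.1, hβ.2, abs_nonneg m]
      _ ≤ Z := exp_integral_le_integral_exp (hV0.const_mul _) hexp
  have hnum : ∫ x, |exp (-β * V x) * V x| ∂μ ≤ ∫ x, |V x| + |exp (-V x) * V x| ∂μ :=
    integral_mono (integrable_exp_neg_mul_mul hV0 hV1 hβ).abs (hV0.abs.add hV1.abs)
      fun x => abs_exp_neg_mul_mul_le hβ (V x)
  calc ∫ x, |V x| ∂μ.tilted (fun x => -β * V x)
      = (∫ x, |exp (-β * V x) * V x| ∂μ) / Z := by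
        rw [integral_tilted, ← integral_div]
        congr 1 with x
        rw [smul_eq_mul, abs_mul, abs_of_pos (exp_pos _)]
        ring
    _ ≤ (∫ x, |V x| + |exp (-V x) * V x| ∂μ) / exp (-|m|) :=
        div_le_div₀ (integral_nonneg fun _ => by positivity) hnum (exp_pos _) hZ
    _ = _ := by rw [exp_neg, div_inv_eq_mul]

end
theorem swap_prob_lipschitz_general {X : Type*} [MeasurableSpace X]
    (μ0 : Measure X) [IsProbabilityMeasure μ0]
    (V : X → ℝ) (hV : Measurable V)
    (Z : ℝ → ℝ)
    (hZ : ∀ β ∈ Set.Icc (0:ℝ) 1, Z β = ∫ x, Real.exp (-β * V x) ∂μ0)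
    (hZint : ∀ β ∈ Set.Icc (0:ℝ) 1, Integrable (fun x => Real.exp (-β * V x)) μ0)
    (πa : ℝ → Measure X)
    (hπ : ∀ β, πa β = μ0.withDensity (fun x => ENNReal.ofReal (Real.exp (-β * V x) / Z β)))
    (hV0 : Integrable V μ0) (hV1 : Integrable V (πa 1))
    (s : ℝ → ℝ → ℝ)
    (hs : ∀ β β', s β β' =
      ∫ x, ∫ y, Real.exp (min 0 ((β' - β) * (V y - V x))) ∂(πa β') ∂(πa β)) :
    ∃ C > 0, ∀ β δ : ℝ, 0 ≤ β → 0 ≤ δ → β + δ ≤ 1 →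
      |s β (β + δ) - 1| ≤ C * δ := by
  have hπ_tilted : ∀ β ∈ Icc (0 : ℝ) 1, πa β = μ0.tilted fun x => -β * V x := by
    intro β hβ
    rw [hπ, Measure.tilted, hZ β hβ]
  have hprob : ∀ β ∈ Icc (0 : ℝ) 1, IsProbabilityMeasure (πa β) := fun β hβ =>
    hπ_tilted β hβ ▸ isProbabilityMeasure_tilted (hZint β hβ)
  have h1 : (1 : ℝ) ∈ Icc (0 : ℝ) 1 := right_mem_Icc.mpr zero_le_one
  have hV1' : Integrable (fun x => exp (-V x) * V x) μ0 := by
    rw [hπ_tilted 1 h1, integrable_tilted_iff (hZint 1 h1)] at hV1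
    simpa using hV1
  have hVπ : ∀ β ∈ Icc (0 : ℝ) 1, Integrable V (πa β) := fun β hβ => by
    rw [hπ_tilted β hβ, integrable_tilted_iff (hZint β hβ)]
    exact integrable_exp_neg_mul_mul hV0 hV1' hβ
  set B := (∫ x, |V x| + |exp (-V x) * V x| ∂μ0) * exp |∫ x, V x ∂μ0|
  have hmoment : ∀ β ∈ Icc (0 : ℝ) 1, ∫ x, |V x| ∂πa β ≤ B := fun β hβ =>
    hπ_tilted β hβ ▸ integral_abs_tilted_neg_mul_le hV0 hV1' hβ (hZint β hβ)
  have hB : 0 ≤ B := mul_nonneg (integral_nonneg fun _ => by positivity) (exp_pos _).le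
  refine ⟨2 * B + 1, by positivity, fun β δ hβ hδ hβδ => ?_⟩
  have hβ' : β ∈ Icc (0 : ℝ) 1 := ⟨hβ, by linarith⟩
  have hβδ' : β + δ ∈ Icc (0 : ℝ) 1 := ⟨by linarith, hβδ⟩
  have := hprob β hβ'
  have := hprob (β + δ) hβδ'
  rw [hs, add_sub_cancel_left]
  calc _ ≤ |δ| * (∫ x, |V x| ∂πa β + ∫ y, |V y| ∂πa (β + δ)) :=
        abs_integral_integral_exp_min_sub_one_le hV (hVπ β hβ') (hVπ _ hβδ') δ
    _ ≤ δ * (B + B) := by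
        rw [abs_of_nonneg hδ]
        gcongr
        exacts [hmoment β hβ', hmoment _ hβδ']
    _ ≤ (2 * B + 1) * δ := by nlinarith

/-- If `|V|` is integrable with respect to both the reference `π₀` and the target
`π = π^{(1)}`, then there is a constant `C > 0` such that the swap probability
function satisfies `|s(β, β+δ) - 1| ≤ C δ` for all `β ∈ [0,1]`, `δ ≥ 0` with
`β + δ ≤ 1`. Here `π^{(β)}` has density `exp(-β V)/Z(β)` with respect to `π₀`
and `s(β,β') = E[exp(min{0, (β'-β)(V^{(β')} - V^{(β)})})]` for independent
`V^{(β)}, V^{(β')}`. -/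
theorem swap_prob_lipschitz {X : Type*} [MeasurableSpace X]
    (μ0 : Measure X) [IsProbabilityMeasure μ0]
    (V : X → ℝ) (hV : Measurable V)
    (Z : ℝ → ℝ)
    (hZ : ∀ β ∈ Set.Icc (0:ℝ) 1, Z β = ∫ x, Real.exp (-β * V x) ∂μ0)
    (hZint : ∀ β ∈ Set.Icc (0:ℝ) 1, Integrable (fun x => Real.exp (-β * V x)) μ0)
    (hZpos : ∀ β ∈ Set.Icc (0:ℝ) 1, 0 < Z β)
    (πa : ℝ → Measure X)
    (hπ : ∀ β, πa β = μ0.withDensity (fun x => ENNReal.ofReal (Real.exp (-β * V x) / Z β)))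
    (hV0 : Integrable V μ0) (hV1 : Integrable V (πa 1))
    (s : ℝ → ℝ → ℝ)
    (hs : ∀ β β', s β β' =
      ∫ x, ∫ y, Real.exp (min 0 ((β' - β) * (V y - V x))) ∂(πa β') ∂(πa β)) :
    ∃ C > 0, ∀ β δ : ℝ, 0 ≤ β → 0 ≤ δ → β + δ ≤ 1 →
      |s β (β + δ) - 1| ≤ C * δ :=
  swap_prob_lipschitz_general μ0 V hV Z hZ hZint πa hπ hV0 hV1 s hs
end

section
/- If |V|^k is integrable with respect to π_0 and π, then the local communication barrier λ(β) = (1/2) E[|V_1^{(β)} - V_2^{(β)}|], where V_1^{(β)}, V_2^{(β)} are i.i.d. with the law of V under π^{(β)}, is (k-1) times continuously differentiable on [0,1]. -/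
/-!
Both `Z(β)` and the double integral `g(β)` are integrals `∫ f e^{-βW} dν` of one parameter `β`:
`Z` with `f = 1`, `W = V` under `π₀`, and `g` with `f(x,y) = |V x - V y|`, `W(x,y) = V x + V y`
under `π₀ ⊗ π₀`. Differentiating under the integral sign multiplies the integrand by `-W`, and
for `β ∈ [0,1]` convexity gives `e^{-βW} ≤ 1 + e^{-W}`, so `j` derivatives are dominated by
`|f| |W|^j (1 + e^{-W})`. The moment assumptions make this integrable for `j ≤ k - 1` in both
cases (for `g` because `|V x - V y| |V x + V y|^j ≲ |V x|^{j+1} + |V y|^{j+1}`), hence `Z` and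
`g` are `C^{k-1}` on `[0,1]`, and so is `λ = g / (2 Z²)` since `Z > 0` there.
-/

open MeasureTheory Real Set Filter Topology

lemma contDiffOn_succ_of_hasDerivWithinAt {f f' : ℝ → ℝ} {s : Set ℝ} {n : ℕ}
    (hs : UniqueDiffOn ℝ s) (hf : ∀ x ∈ s, HasDerivWithinAt f (f' x) s x)
    (hf' : ContDiffOn ℝ n f' s) :
    ContDiffOn ℝ (n + 1 : ℕ) f s := by
  rw [Nat.cast_add, Nat.cast_one, contDiffOn_succ_iff_derivWithin hs]
  refine ⟨fun x hx => (hf x hx).differentiableWithinAt, by simp, ?_⟩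
  exact hf'.congr fun x hx => (hf x hx).derivWithin (hs x hx)

section DominatedSlope

variable {Y : Type*} [MeasurableSpace Y] {ν : Measure Y}

lemma hasDerivWithinAt_integral_of_dominated_slope {F : ℝ → Y → ℝ} {F' bound : Y → ℝ}
    {s : Set ℝ} {x : ℝ} (hx : x ∈ s) (hF_int : ∀ b ∈ s, Integrable (F b) ν)
    (h_slope : ∀ b ∈ s, ∀ᵐ y ∂ν, |F b y - F x y| ≤ bound y * |b - x|)
    (bound_integrable : Integrable bound ν)
    (h_diff : ∀ᵐ y ∂ν, HasDerivWithinAt (F · y) (F' y) s x) :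
    HasDerivWithinAt (fun b => ∫ y, F b y ∂ν) (∫ y, F' y ∂ν) s x := by
  rw [hasDerivWithinAt_iff_tendsto_slope]
  refine (tendsto_integral_filter_of_dominated_convergence (F := fun b y => slope (F · y) x b)
    bound ?_ ?_ bound_integrable ?_).congr' ?_
  · filter_upwards [self_mem_nhdsWithin] with b hb
    simp only [slope_def_field]
    exact (((hF_int b hb.1).sub (hF_int x hx)).div_const (b - x)).aestronglyMeasurable
  · filter_upwards [self_mem_nhdsWithin] with b hb
    filter_upwards [h_slope b hb.1] with y hy
    rw [slope_def_field, norm_div, Real.norm_eq_abs, Real.norm_eq_abs,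
      div_le_iff₀ (abs_pos.2 (sub_ne_zero.2 hb.2))]
    exact hy
  · filter_upwards [h_diff] with y hy
    exact hasDerivWithinAt_iff_tendsto_slope.1 hy
  · filter_upwards [self_mem_nhdsWithin] with b hb
    simp only [slope_def_field]
    rw [integral_div, integral_sub (hF_int b hb.1) (hF_int x hx)]

end DominatedSlope

namespace Real

lemma exp_neg_mul_le_one_add_exp_neg {b : ℝ} (hb : b ∈ Icc (0 : ℝ) 1) (w : ℝ) :
    exp (-b * w) ≤ 1 + exp (-w) := by
  rcases le_total 0 w with hw | hw
  · have : exp (-b * w) ≤ 1 := exp_le_one_iff.2 (by nlinarith [hb.1])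
    linarith [exp_pos (-w)]
  · have : exp (-b * w) ≤ exp (-w) := exp_le_exp.2 (by nlinarith [hb.2])
    linarith

lemma abs_exp_neg_mul_sub_exp_neg_mul_le {b c : ℝ} (hb : b ∈ Icc (0 : ℝ) 1)
    (hc : c ∈ Icc (0 : ℝ) 1) (w : ℝ) :
    |exp (-b * w) - exp (-c * w)| ≤ |w| * (1 + exp (-w)) * |b - c| := by
  have hderiv : ∀ a ∈ Icc (0 : ℝ) 1,
      HasDerivWithinAt (fun a => exp (-a * w)) (exp (-a * w) * -w) (Icc 0 1) a := fun a _ => by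
    simpa using ((hasDerivAt_id a).neg.mul_const w).exp.hasDerivWithinAt
  refine (convex_Icc 0 1).norm_image_sub_le_of_norm_hasDerivWithin_le hderiv (fun a ha => ?_) hc hb
  rw [norm_mul, norm_neg, Real.norm_eq_abs, abs_exp, mul_comm, Real.norm_eq_abs]
  exact mul_le_mul_of_nonneg_left (exp_neg_mul_le_one_add_exp_neg ha w) (abs_nonneg w)


lemma exp_neg_le_exp_one_add_abs_pow_mul_exp_neg (v : ℝ) (k : ℕ) :
    exp (-v) ≤ exp 1 + |v| ^ k * exp (-v) := by
  rcases le_total (-v) 1 with h | h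
  · linarith [exp_le_exp.2 h, mul_nonneg (pow_nonneg (abs_nonneg v) k) (exp_pos (-v)).le]
  · have : 1 ≤ |v| ^ k := one_le_pow₀ (by rw [abs_of_neg (by linarith)]; linarith)
    nlinarith [exp_pos 1, exp_pos (-v)]

end Real

noncomputable def tiltedIntegral {Y : Type*} [MeasurableSpace Y] (ν : Measure Y) (f W : Y → ℝ)
    (β : ℝ) : ℝ :=
  ∫ y, f y * exp (-β * W y) ∂ν

section TiltedIntegral

variable {Y : Type*} [MeasurableSpace Y] {ν : Measure Y} {f W : Y → ℝ}

lemma integrable_mul_exp_neg_mul (hf : AEStronglyMeasurable f ν) (hW : Measurable W)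
    (h0 : Integrable (fun y => |f y| * (1 + exp (-W y))) ν) {b : ℝ} (hb : b ∈ Icc (0 : ℝ) 1) :
    Integrable (fun y => f y * exp (-b * W y)) ν := by
  refine h0.mono (hf.mul (hW.const_mul (-b)).exp.aestronglyMeasurable) ?_
  filter_upwards with y
  simp only [norm_mul, Real.norm_eq_abs, abs_exp, abs_abs,
    abs_of_nonneg (by positivity : (0 : ℝ) ≤ 1 + exp (-W y))]
  exact mul_le_mul_of_nonneg_left (exp_neg_mul_le_one_add_exp_neg hb _) (abs_nonneg _)

lemma continuousOn_tiltedIntegral (hf : AEStronglyMeasurable f ν) (hW : Measurable W)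
    (h0 : Integrable (fun y => |f y| * (1 + exp (-W y))) ν) :
    ContinuousOn (tiltedIntegral ν f W) (Icc 0 1) := by
  refine continuousOn_of_dominated
    (fun b _ => hf.mul (hW.const_mul (-b)).exp.aestronglyMeasurable) (fun b hb => ?_) h0 ?_
  · filter_upwards with y
    rw [norm_mul, Real.norm_eq_abs, Real.norm_eq_abs, abs_exp]
    exact mul_le_mul_of_nonneg_left (exp_neg_mul_le_one_add_exp_neg hb _) (abs_nonneg _)
  · filter_upwards with y
    exact Continuous.continuousOn (by fun_prop)

lemma hasDerivWithinAt_tiltedIntegral (hf : AEStronglyMeasurable f ν) (hW : Measurable W)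
    (h0 : Integrable (fun y => |f y| * (1 + exp (-W y))) ν)
    (h1 : Integrable (fun y => |f y| * |W y| * (1 + exp (-W y))) ν)
    {β : ℝ} (hβ : β ∈ Icc (0 : ℝ) 1) :
    HasDerivWithinAt (tiltedIntegral ν f W)
      (tiltedIntegral ν (fun y => -(f y * W y)) W β) (Icc 0 1) β := by
  refine hasDerivWithinAt_integral_of_dominated_slope hβ
    (fun b hb => integrable_mul_exp_neg_mul hf hW h0 hb) (fun b hb => ?_) h1 ?_
  · filter_upwards with y
    calc |f y * exp (-b * W y) - f y * exp (-β * W y)|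
        = |f y| * |exp (-b * W y) - exp (-β * W y)| := by rw [← mul_sub, abs_mul]
      _ ≤ |f y| * (|W y| * (1 + exp (-W y)) * |b - β|) :=
        mul_le_mul_of_nonneg_left (abs_exp_neg_mul_sub_exp_neg_mul_le hb hβ _) (abs_nonneg _)
      _ = |f y| * |W y| * (1 + exp (-W y)) * |b - β| := by ring
  · filter_upwards with y
    refine (((hasDerivAt_neg β).mul_const (W y)).exp.const_mul (f y)).hasDerivWithinAt
      |>.congr_deriv ?_
    ring

lemma contDiffOn_tiltedIntegral {m : ℕ} (hf : AEStronglyMeasurable f ν) (hW : Measurable W)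
    (hmom : ∀ j ≤ m, Integrable (fun y => |f y| * |W y| ^ j * (1 + exp (-W y))) ν) :
    ContDiffOn ℝ m (tiltedIntegral ν f W) (Icc 0 1) := by
  induction m generalizing f with
  | zero =>
    refine contDiffOn_zero.2 (continuousOn_tiltedIntegral hf hW ?_)
    simpa using hmom 0 le_rfl
  | succ m ih =>
    have hderiv := fun β (hβ : β ∈ Icc (0 : ℝ) 1) => hasDerivWithinAt_tiltedIntegral hf hW
      (by simpa using hmom 0 (Nat.zero_le _)) (by simpa using hmom 1 (by omega)) hβ
    refine contDiffOn_succ_of_hasDerivWithinAt (uniqueDiffOn_Icc zero_lt_one) hderiv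
      (ih (hf.mul hW.aestronglyMeasurable).neg fun j hj => ?_)
    refine (hmom (j + 1) (by omega)).congr (Eventually.of_forall fun y => ?_)
    simp only [abs_neg, abs_mul, pow_succ]
    ring

end TiltedIntegral

lemma pow_le_one_add_pow {a : ℝ} (ha : 0 ≤ a) {j k : ℕ} (hjk : j ≤ k) : a ^ j ≤ 1 + a ^ k := by
  rcases le_total a 1 with h | h
  · linarith [pow_le_one₀ ha h (n := j), pow_nonneg ha k]
  · linarith [pow_le_pow_right₀ h hjk]

lemma abs_sub_mul_abs_add_pow_mul_one_add_exp_neg_le (a b : ℝ) (j : ℕ) :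
    |a - b| * |a + b| ^ j * (1 + exp (-(a + b))) ≤
      2 ^ j * (|a| ^ (j + 1) * (1 + exp (-a)) * (1 + exp (-b)) +
        (1 + exp (-a)) * (|b| ^ (j + 1) * (1 + exp (-b)))) := by
  have hpow : |a - b| * |a + b| ^ j ≤ 2 ^ j * (|a| ^ (j + 1) + |b| ^ (j + 1)) :=
    calc |a - b| * |a + b| ^ j ≤ (|a| + |b|) * (|a| + |b|) ^ j :=
          mul_le_mul (abs_sub _ _) (pow_le_pow_left₀ (abs_nonneg _) (abs_add_le _ _) j)
            (by positivity) (by positivity)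
      _ = (|a| + |b|) ^ (j + 1) := (pow_succ' _ _).symm
      _ ≤ 2 ^ j * (|a| ^ (j + 1) + |b| ^ (j + 1)) := add_pow_le (abs_nonneg _) (abs_nonneg _) _
  have hexp : 1 + exp (-(a + b)) ≤ (1 + exp (-a)) * (1 + exp (-b)) := by
    rw [neg_add, exp_add]
    nlinarith [exp_pos (-a), exp_pos (-b)]
  calc |a - b| * |a + b| ^ j * (1 + exp (-(a + b)))
      ≤ 2 ^ j * (|a| ^ (j + 1) + |b| ^ (j + 1)) * ((1 + exp (-a)) * (1 + exp (-b))) :=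
        mul_le_mul hpow hexp (by positivity) (by positivity)
    _ = _ := by ring

section Moments

variable {X : Type*} [MeasurableSpace X] {μ : Measure X} {V : X → ℝ}

lemma integrable_abs_pow_mul_one_add_exp_neg [IsFiniteMeasure μ] (hV : Measurable V) {j k : ℕ}
    (hjk : j ≤ k) (h0 : Integrable (fun x => |V x| ^ k) μ)
    (h1 : Integrable (fun x => |V x| ^ k * exp (-V x)) μ) :
    Integrable (fun x => |V x| ^ j * (1 + exp (-V x))) μ := by
  have hexp : Integrable (fun x => exp (-V x)) μ :=
    ((integrable_const (exp 1)).add h1).mono hV.neg.exp.aestronglyMeasurable <|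
      Eventually.of_forall fun x => by
        simp only [Real.norm_eq_abs, abs_exp, Pi.add_apply]
        exact (exp_neg_le_exp_one_add_abs_pow_mul_exp_neg _ k).trans (le_abs_self _)
  refine ((((integrable_const 1).add h0).add hexp).add h1).mono'
    ((hV.abs.pow_const j).mul (hV.neg.exp.const_add 1)).aestronglyMeasurable <|
      Eventually.of_forall fun x => ?_
  have hle : |V x| ^ j * (1 + exp (-V x)) ≤ (1 + |V x| ^ k) * (1 + exp (-V x)) :=
    mul_le_mul_of_nonneg_right (pow_le_one_add_pow (abs_nonneg _) hjk) (by positivity)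
  rw [Real.norm_of_nonneg (by positivity)]
  simp only [Pi.add_apply]
  linarith

lemma integrable_abs_sub_mul_abs_add_pow_mul_one_add_exp_neg [SFinite μ] (hV : Measurable V)
    {j : ℕ} (hA : Integrable (fun x => |V x| ^ (j + 1) * (1 + exp (-V x))) μ)
    (hB : Integrable (fun x => 1 + exp (-V x)) μ) :
    Integrable (fun p : X × X => |V p.1 - V p.2| * |V p.1 + V p.2| ^ j *
      (1 + exp (-(V p.1 + V p.2)))) (μ.prod μ) := by
  have hV₁ : Measurable fun p : X × X => V p.1 := hV.comp measurable_fst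
  have hV₂ : Measurable fun p : X × X => V p.2 := hV.comp measurable_snd
  refine (((hA.mul_prod hB).add (hB.mul_prod hA)).const_mul (2 ^ j)).mono'
    ((((hV₁.sub hV₂).abs.mul ((hV₁.add hV₂).abs.pow_const j)).mul
      ((hV₁.add hV₂).neg.exp.const_add 1))).aestronglyMeasurable <|
      Eventually.of_forall fun p => ?_
  rw [Real.norm_of_nonneg (by positivity)]
  exact abs_sub_mul_abs_add_pow_mul_one_add_exp_neg_le _ _ _

end Moments

/-- If `|V|^k` is integrable with respect to `π₀` and `π`, then the local
communication barrier
`λ(β) = (1/2) E[|V₁^{(β)} - V₂^{(β)}|]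
      = (1/(2 Z(β)²)) ∬ |V(x) - V(y)| e^{-β(V(x)+V(y))} dπ₀(x) dπ₀(y)`
is `(k-1)` times continuously differentiable on `[0,1]`. -/
theorem communication_barrier_smooth {X : Type*} [MeasurableSpace X]
    (μ0 : Measure X) [IsProbabilityMeasure μ0]
    (V : X → ℝ) (hV : Measurable V) (k : ℕ) (hk : 1 ≤ k)
    (h0 : Integrable (fun x => |V x| ^ k) μ0)
    (h1 : Integrable (fun x => |V x| ^ k * Real.exp (-(V x))) μ0)
    (Z lam : ℝ → ℝ)
    (hZ : ∀ β, Z β = ∫ x, Real.exp (-β * V x) ∂μ0)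
    (hZpos : ∀ β ∈ Set.Icc (0:ℝ) 1, 0 < Z β)
    (hlam : ∀ β, lam β = (1 / (2 * (Z β) ^ 2)) *
      ∫ x, ∫ y, |V x - V y| * Real.exp (-β * (V x + V y)) ∂μ0 ∂μ0) :
    ContDiffOn ℝ ((k - 1 : ℕ) : ℕ∞) lam (Set.Icc 0 1) := by
  have hmom (j : ℕ) (hj : j ≤ k) : Integrable (fun x => |V x| ^ j * (1 + exp (-V x))) μ0 :=
    integrable_abs_pow_mul_one_add_exp_neg hV hj h0 h1
  have hZ_smooth : ContDiffOn ℝ ((k - 1 : ℕ) : ℕ∞) Z (Icc 0 1) :=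
    (contDiffOn_tiltedIntegral (f := fun _ => 1) (m := k - 1) aestronglyMeasurable_const hV
      fun j hj => by simpa using hmom j (by omega)).congr fun β _ => by simp [hZ, tiltedIntegral]
  have hf : Measurable fun p : X × X => |V p.1 - V p.2| :=
    ((hV.comp measurable_fst).sub (hV.comp measurable_snd)).abs
  have hW : Measurable fun p : X × X => V p.1 + V p.2 :=
    (hV.comp measurable_fst).add (hV.comp measurable_snd)
  have hmom₂ (j : ℕ) (hj : j ≤ k - 1) := integrable_abs_sub_mul_abs_add_pow_mul_one_add_exp_neg hV
    (hmom (j + 1) (by omega)) (by simpa using hmom 0 (Nat.zero_le _))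
  have hg_smooth := contDiffOn_tiltedIntegral (m := k - 1) hf.aestronglyMeasurable hW
    fun j hj => by simpa using hmom₂ j hj
  have hfubini : ∀ β ∈ Icc (0 : ℝ) 1,
      ∫ x, ∫ y, |V x - V y| * exp (-β * (V x + V y)) ∂μ0 ∂μ0 =
        tiltedIntegral (μ0.prod μ0) (fun p => |V p.1 - V p.2|) (fun p => V p.1 + V p.2) β :=
    fun β hβ => (integral_prod _ (integrable_mul_exp_neg_mul hf.aestronglyMeasurable hW
      (by simpa using hmom₂ 0 (Nat.zero_le _)) hβ)).symm
  have hden_ne : ∀ β ∈ Icc (0 : ℝ) 1, 2 * Z β ^ 2 ≠ 0 := fun β hβ =>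
    (mul_pos two_pos (pow_pos (hZpos β hβ) 2)).ne'
  refine (((contDiffOn_const (c := (1 : ℝ))).div (contDiffOn_const.mul (hZ_smooth.pow 2))
    hden_ne).mul hg_smooth).congr fun β hβ => ?_
  rw [hlam, hfubini β hβ, Pi.div_apply]
end

section
/- Under the multimodal decomposition assumption, the local communication barrier decomposes as λ(β) = sum_{k,k'} p_k p_{k'} λ_{k,k'}(β), where λ_{k,k'}(β) = (1/2) E[|V_k^{(β)} - V_{k'}^{(β)}|], and consequently Λ = sum_{k,k'} p_k p_{k'} Λ_{k,k'}. -/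
/-!
Both sides are double integrals of `|u - v|`. Since `μ = ∑ₖ pₖ νₖ`, the product measure expands
bilinearly as `μ ⊗ μ = ∑_{k,k'} pₖ pₖ' νₖ ⊗ νₖ'`; positivity of the weights carries integrability
against `μ ⊗ μ` over to every `νₖ ⊗ νₖ'`, so the integral splits term by term and Fubini turns each
term back into an iterated integral. Integrating the resulting finite sum over `β ∈ [0, 1]` gives
the statement for `Λ`.
-/

namespace MeasureTheory

variable {ι ι' α β E : Type*} [Fintype ι] [Fintype ι'] [MeasurableSpace α] [MeasurableSpace β]
  [NormedAddCommGroup E]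

theorem Measure.le_fintype_sum (m : ι → Measure α) (i : ι) : m i ≤ ∑ j, m j :=
  Measure.sum_fintype m ▸ Measure.le_sum m i

instance Measure.sFinite_fintype_sum (m : ι → Measure α) [∀ i, SFinite (m i)] :
    SFinite (∑ i, m i) :=
  Measure.sum_fintype m ▸ inferInstance

theorem Integrable.of_mixture {p : ι → ℝ} (hp : ∀ i, 0 < p i)
    {ν : ι → Measure α} {f : α → E} (hf : Integrable f (∑ j, ENNReal.ofReal (p j) • ν j))
    (i : ι) : Integrable f (ν i) :=
  (integrable_smul_measure (ENNReal.ofReal_pos.2 (hp i)).ne' ENNReal.ofReal_ne_top).1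
    (hf.mono_measure (Measure.le_fintype_sum _ i))

variable [NormedSpace ℝ E]

theorem integral_mixture {p : ι → ℝ} (hp : ∀ i, 0 ≤ p i) {ν : ι → Measure α} {f : α → E}
    (hf : Integrable f (∑ j, ENNReal.ofReal (p j) • ν j)) :
    ∫ x, f x ∂(∑ j, ENNReal.ofReal (p j) • ν j) = ∑ i, p i • ∫ x, f x ∂ν i := by
  rw [integral_finsetSum_measure fun i _ => hf.mono_measure (Measure.le_fintype_sum _ i)]
  simp_rw [integral_smul_measure, ENNReal.toReal_ofReal (hp _)]

theorem Measure.prod_mixture {p : ι → ℝ} (hp : ∀ i, 0 ≤ p i) (q : ι' → ℝ)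
    (μ : ι → Measure α) (ν : ι' → Measure β) [∀ j, SFinite (ν j)] :
    (∑ i, ENNReal.ofReal (p i) • μ i).prod (∑ j, ENNReal.ofReal (q j) • ν j) =
      ∑ ij : ι × ι', ENNReal.ofReal (p ij.1 * q ij.2) • (μ ij.1).prod (ν ij.2) := by
  simp_rw [← Measure.sum_fintype, Measure.prod_sum, Measure.sum_fintype, Measure.prod_smul_left,
    Measure.prod_smul_right, smul_smul, ENNReal.ofReal_mul (hp _)]

theorem integral_integral_mixture {p : ι → ℝ} (hp : ∀ i, 0 < p i) {q : ι' → ℝ}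
    (hq : ∀ j, 0 < q j) {μ : ι → Measure α} {ν : ι' → Measure β} [∀ i, SFinite (μ i)]
    [∀ j, SFinite (ν j)] {f : α × β → E}
    (hf : Integrable f ((∑ i, ENNReal.ofReal (p i) • μ i).prod
      (∑ j, ENNReal.ofReal (q j) • ν j))) :
    ∫ x, ∫ y, f (x, y) ∂(∑ j, ENNReal.ofReal (q j) • ν j) ∂(∑ i, ENNReal.ofReal (p i) • μ i) =
      ∑ i, ∑ j, (p i * q j) • ∫ x, ∫ y, f (x, y) ∂ν j ∂μ i := by
  have hpq (ij : ι × ι') : 0 < p ij.1 * q ij.2 := mul_pos (hp _) (hq _)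
  rw [← integral_prod _ hf]
  rw [Measure.prod_mixture (fun i => (hp i).le)] at hf ⊢
  rw [integral_mixture (fun ij => (hpq ij).le) hf, Fintype.sum_prod_type]
  refine Finset.sum_congr rfl fun i _ => Finset.sum_congr rfl fun j _ => ?_
  rw [integral_prod _ (hf.of_mixture hpq (i, j))]

end MeasureTheory

open MeasureTheory

theorem multimodal_decomposition_general (K : ℕ)
    (p : Fin K → ℝ) (hp : ∀ k, 0 < p k)
    (ν : Fin K → ℝ → Measure ℝ) (hν : ∀ k β, IsProbabilityMeasure (ν k β))
    (μ : ℝ → Measure ℝ)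
    (hμ : ∀ β, μ β = ∑ k, (ENNReal.ofReal (p k)) • ν k β)
    (hIntMix : ∀ β ∈ Set.Icc (0:ℝ) 1,
      Integrable (fun q : ℝ × ℝ => |q.1 - q.2|) ((μ β).prod (μ β)))
    (lam : ℝ → ℝ) (lamkk : Fin K → Fin K → ℝ → ℝ)
    (hlam : ∀ β, lam β = (1/2) * ∫ u, ∫ v, |u - v| ∂(μ β) ∂(μ β))
    (hlamkk : ∀ k k' β, lamkk k k' β = (1/2) * ∫ u, ∫ v, |u - v| ∂(ν k' β) ∂(ν k β))
    (hIntβ : ∀ k k', IntervalIntegrable (lamkk k k') volume 0 1) :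
    (∀ β ∈ Set.Icc (0:ℝ) 1, lam β = ∑ k, ∑ k', p k * p k' * lamkk k k' β) ∧
    (∫ β in (0:ℝ)..1, lam β)
      = ∑ k, ∑ k', p k * p k' * ∫ β in (0:ℝ)..1, lamkk k k' β := by
  have pointwise (β : ℝ) (hβ : β ∈ Set.Icc (0:ℝ) 1) :
      lam β = ∑ k, ∑ k', p k * p k' * lamkk k k' β := by
    have hint := hIntMix β hβ
    rw [hμ β] at hint
    have hsplit :=
      integral_integral_mixture (μ := fun k => ν k β) (ν := fun k => ν k β) hp hp hint
    simp only [← hμ β] at hsplit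
    rw [hlam, hsplit, Finset.mul_sum]
    refine Finset.sum_congr rfl fun k _ => ?_
    rw [Finset.mul_sum]
    refine Finset.sum_congr rfl fun k' _ => ?_
    rw [hlamkk, smul_eq_mul]
    ring
  refine ⟨pointwise, ?_⟩
  rw [intervalIntegral.integral_congr fun β hβ =>
    pointwise β (Set.uIcc_of_le zero_le_one (α := ℝ) ▸ hβ)]
  simp_rw [← Fintype.sum_prod_type']
  rw [intervalIntegral.integral_finsetSum fun kk _ => (hIntβ kk.1 kk.2).const_mul _]
  simp_rw [intervalIntegral.integral_const_mul]

/-- Multimodal decomposition of the communication barrier: if the law of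
`V^{(β)}` is the mixture `∑_k p_k ν_k(β)` (with `ν_k(β)` the law of `V_k^{(β)}`
in mode `k`, and `p_k = π(X_k) = π₀(X_k)`), then
`λ(β) = ∑_{k,k'} p_k p_{k'} λ_{k,k'}(β)` and consequently
`Λ = ∑_{k,k'} p_k p_{k'} Λ_{k,k'}`. -/
theorem multimodal_decomposition (K : ℕ) (hK : 1 ≤ K)
    (p : Fin K → ℝ) (hp : ∀ k, 0 < p k) (hpsum : ∑ k, p k = 1)
    (ν : Fin K → ℝ → Measure ℝ) (hν : ∀ k β, IsProbabilityMeasure (ν k β))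
    (μ : ℝ → Measure ℝ)
    (hμ : ∀ β, μ β = ∑ k, (ENNReal.ofReal (p k)) • ν k β)
    (hIntMix : ∀ β ∈ Set.Icc (0:ℝ) 1,
      Integrable (fun q : ℝ × ℝ => |q.1 - q.2|) ((μ β).prod (μ β)))
    (lam : ℝ → ℝ) (lamkk : Fin K → Fin K → ℝ → ℝ)
    (hlam : ∀ β, lam β = (1/2) * ∫ u, ∫ v, |u - v| ∂(μ β) ∂(μ β))
    (hlamkk : ∀ k k' β, lamkk k k' β = (1/2) * ∫ u, ∫ v, |u - v| ∂(ν k' β) ∂(ν k β))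
    (hIntβ : ∀ k k', IntervalIntegrable (lamkk k k') volume 0 1) :
    (∀ β ∈ Set.Icc (0:ℝ) 1, lam β = ∑ k, ∑ k', p k * p k' * lamkk k k' β) ∧
    (∫ β in (0:ℝ)..1, lam β)
      = ∑ k, ∑ k', p k * p k' * ∫ β in (0:ℝ)..1, lamkk k k' β :=
  multimodal_decomposition_general K p hp ν hν μ hμ hIntMix lam lamkk hlam hlamkk hIntβ
end

section
/- For the discrete multimodal model on X = {0,...,2k} with π^{(β)}(x) = a^{β·1_Even(x)}/Z(β), Z(β) = k + (k+1)a^β, the local communication barrier equals λ(β) = k(k+1) a^β log(a) / (k + (k+1)a^β)², and its integral over [0,1] equals Λ = k(k+1)(a-1) / ((2k+1)(k + (k+1)a)). -/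
/-!
The energy `V = -1_Even · log a` takes only two values, so `|V(X₁) - V(X₂)|` is `log a`
exactly when one of `X₁, X₂` is even: `λ(β) = π(Even) π(Odd) log a` with
`π(Even) = (k+1) a^β / Z(β)` and `π(Odd) = k / Z(β)`. This is the derivative of `-k / Z(β)`,
so `Λ = k / Z(0) - k / Z(1)`.
-/

open Finset Real

theorem card_filter_not_even_range_two_mul_add_one (k : ℕ) :
    #{x ∈ range (2 * k + 1) | ¬Even x} = k := by
  have h := Nat.card_multiples (2 * k + 1) 2
  simp only [← even_iff_two_dvd, Nat.even_add_one] at h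
  omega

theorem card_filter_even_range_two_mul_add_one (k : ℕ) :
    #{x ∈ range (2 * k + 1) | Even x} = k + 1 := by
  have h := card_filter_add_card_filter_not (s := range (2 * k + 1)) (fun x => Even x)
  rw [card_filter_not_even_range_two_mul_add_one, card_range] at h
  omega

theorem sum_sum_mul_abs_sub_ite {α : Type*} (s : Finset α) (p : α → Prop) [DecidablePred p]
    (w : α → ℝ) (u v : ℝ) :
    ∑ x ∈ s, ∑ y ∈ s, w x * w y * |(if p x then u else v) - (if p y then u else v)|
      = 2 * (∑ x ∈ s with p x, w x) * (∑ x ∈ s with ¬p x, w x) * |u - v| := by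
  have h : ∀ x y, w x * w y * |(if p x then u else v) - (if p y then u else v)|
      = |u - v| * w x * if p x then (if p y then 0 else w y) else (if p y then w y else 0) := by
    intro x y
    by_cases hx : p x <;> by_cases hy : p y <;> simp [hx, hy, abs_sub_comm v u] <;> ring
  simp only [h, ← mul_sum, sum_ite_irrel, sum_ite, sum_const_zero, add_zero, zero_add]
  simp only [mul_ite, sum_ite, ← sum_mul, ← mul_sum]
  ring

theorem hasDerivAt_neg_div_add_mul_rpow {a p q β : ℝ} (ha : 0 < a) (h : p + q * a ^ β ≠ 0) :
    HasDerivAt (fun t => -p / (p + q * a ^ t))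
      (p * q * a ^ β * log a / (p + q * a ^ β) ^ 2) β := by
  have hden : HasDerivAt (fun t => p + q * a ^ t) (q * (a ^ β * log a)) β :=
    ((hasStrictDerivAt_const_rpow ha β).hasDerivAt.const_mul q).const_add p
  exact ((hasDerivAt_const β (-p)).fun_div hden h).congr_deriv (by ring)

theorem integral_mul_rpow_div_add_mul_rpow_sq {a p q : ℝ} (ha : 0 < a) (hp : 0 ≤ p)
    (hq : 0 < q) :
    ∫ t in (0 : ℝ)..1, p * q * a ^ t * log a / (p + q * a ^ t) ^ 2
      = p / (p + q) - p / (p + q * a) := by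
  have hpos : ∀ t : ℝ, 0 < p + q * a ^ t := fun t => by positivity
  have hcont : Continuous fun t : ℝ => p * q * a ^ t * log a / (p + q * a ^ t) ^ 2 := by
    refine .div (by fun_prop (disch := exact ha.ne')) (by fun_prop (disch := exact ha.ne'))
      fun t => pow_ne_zero 2 (hpos t).ne'
  rw [intervalIntegral.integral_eq_sub_of_hasDerivAt
    (fun t _ => hasDerivAt_neg_div_add_mul_rpow ha (hpos t).ne') (hcont.intervalIntegrable 0 1)]
  simp only [rpow_one, rpow_zero, mul_one]
  ring

theorem multimodal_barrier_double_sum (k : ℕ) {a : ℝ} (ha : 1 < a)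
    {e : ℕ → ℝ} (he : ∀ x, e x = if Even x then 1 else 0) (β Z : ℝ) :
    ∑ x ∈ range (2 * k + 1), ∑ y ∈ range (2 * k + 1),
        (a ^ (β * e x) / Z) * (a ^ (β * e y) / Z) * |(-(e x) * log a) - (-(e y) * log a)|
      = 2 * (k * (k + 1) * a ^ β * log a / Z ^ 2) := by
  have hV : ∀ x, -(e x) * log a = if Even x then -log a else 0 := fun x => by
    rw [he]; split_ifs <;> simp
  have h_even :
      ∑ x ∈ range (2 * k + 1) with Even x, a ^ (β * e x) / Z = (k + 1) * (a ^ β / Z) := by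
    rw [sum_congr rfl fun x hx => by rw [he, if_pos (mem_filter.1 hx).2, mul_one], sum_const,
      card_filter_even_range_two_mul_add_one, nsmul_eq_mul]
    push_cast; ring
  have h_odd : ∑ x ∈ range (2 * k + 1) with ¬Even x, a ^ (β * e x) / Z = k * (1 / Z) := by
    rw [sum_congr rfl fun x hx => by rw [he, if_neg (mem_filter.1 hx).2, mul_zero, rpow_zero],
      sum_const, card_filter_not_even_range_two_mul_add_one, nsmul_eq_mul]
  simp only [hV]
  rw [sum_sum_mul_abs_sub_ite, h_even, h_odd, sub_zero, abs_neg, abs_of_pos (log_pos ha)]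
  ring

/-- Communication barrier of the discrete multimodal model on `{0,…,2k}` with
`π^{(β)}(x) = a^{β 1_Even(x)} / Z(β)`, `Z(β) = k + (k+1) a^β`:
`λ(β) = k(k+1) a^β log a / (k + (k+1) a^β)²` and
`Λ = ∫₀¹ λ = k(k+1)(a-1) / ((2k+1)(k + (k+1) a))`. -/
theorem discrete_multimodal_barrier (k : ℕ) (a : ℝ) (ha : 1 < a)
    (e : ℕ → ℝ) (he : ∀ x, e x = if Even x then 1 else 0)
    (Zb : ℝ → ℝ) (hZ : ∀ β, Zb β = (k : ℝ) + ((k : ℝ) + 1) * a ^ β)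
    (lam : ℝ → ℝ)
    (hlam : ∀ β, lam β = (1/2) *
      ∑ x ∈ Finset.range (2*k+1), ∑ y ∈ Finset.range (2*k+1),
        (a ^ (β * e x) / Zb β) * (a ^ (β * e y) / Zb β) *
          |(-(e x) * Real.log a) - (-(e y) * Real.log a)|) :
    (∀ β : ℝ, lam β
        = (k : ℝ) * ((k : ℝ) + 1) * a ^ β * Real.log a
            / ((k : ℝ) + ((k : ℝ) + 1) * a ^ β) ^ 2) ∧
    (∫ β in (0:ℝ)..1, lam β)
      = (k : ℝ) * ((k : ℝ) + 1) * (a - 1)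
          / ((2 * (k : ℝ) + 1) * ((k : ℝ) + ((k : ℝ) + 1) * a)) := by
  have h_lam : ∀ β : ℝ, lam β = (k : ℝ) * ((k : ℝ) + 1) * a ^ β * Real.log a
      / ((k : ℝ) + ((k : ℝ) + 1) * a ^ β) ^ 2 := fun β => by
    rw [hlam, multimodal_barrier_double_sum k ha he, hZ]
    ring
  refine ⟨h_lam, ?_⟩
  rw [funext h_lam, integral_mul_rpow_div_add_mul_rpow_sq (by linarith) k.cast_nonneg
    (by positivity)]
  field_simp
  ring
end

section
/- Suppose k copies of PT are run with N+1 chains each under the core constraint k(N+1) = N̄, and each copy has round trip rate 1/(2(1+E)) with E = N r/(1-r) and r = Λ/N. Then the total round trip rate equals τ_Λ(N) = N̄(1 - Λ/N) / (2(N+1)(1 - Λ/N + Λ)), and over real N > Λ this is maximized at N = 2Λ. -/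
/-!
Each copy of PT with `N + 1` chains costs `(N + 1)(1 + E)` chain-updates per round trip, and
`τ_Λ(N) = N̄ / (2 (N + 1)(1 + E))`. With `u = N - Λ` one has `1 + E = 1 + Λ + Λ² / u`, so the cost is
`(1 + Λ)(u + Λ² / u) + (1 + Λ)² + Λ²`. By AM-GM `u + Λ² / u ≥ 2Λ`, with equality only at `u = Λ`;
hence the cost is uniquely minimized, with value `(2Λ + 1)²`, at `N = 2Λ`, and the derivative of
`τ_Λ` vanishes there by Fermat's theorem.
-/

/-- Here `Λ N / (N - Λ)` is the inefficiency `E = N r / (1 - r)` at `r = Λ / N`. -/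
noncomputable def chainCost (Λ N : ℝ) : ℝ := (N + 1) * (1 + Λ * N / (N - Λ))

lemma two_mul_lt_add_sq_div {x c : ℝ} (hx : 0 < x) (hxc : x ≠ c) : 2 * c < x + c ^ 2 / x := by
  have hsq : 0 < (x - c) ^ 2 / x := div_pos (sq_pos_of_ne_zero (sub_ne_zero.2 hxc)) hx
  have hid : x + c ^ 2 / x - 2 * c = (x - c) ^ 2 / x := by field_simp; ring
  linarith

lemma chainCost_eq {Λ N : ℝ} (hN : N ≠ Λ) :
    chainCost Λ N = (1 + Λ) * ((N - Λ) + Λ ^ 2 / (N - Λ)) + (1 + Λ) ^ 2 + Λ ^ 2 := by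
  have : N - Λ ≠ 0 := sub_ne_zero.2 hN
  unfold chainCost
  field_simp
  ring

lemma chainCost_two_mul {Λ : ℝ} (hΛ : Λ ≠ 0) : chainCost Λ (2 * Λ) = (2 * Λ + 1) ^ 2 := by
  rw [chainCost_eq (by contrapose! hΛ; linarith)]
  field_simp
  ring

lemma sq_two_mul_add_one_lt_chainCost {Λ N : ℝ} (hΛ : -1 < Λ) (hN : Λ < N) (hne : N ≠ 2 * Λ) :
    (2 * Λ + 1) ^ 2 < chainCost Λ N := by
  have hAMGM : 2 * Λ < (N - Λ) + Λ ^ 2 / (N - Λ) :=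
    two_mul_lt_add_sq_div (sub_pos.2 hN) (by contrapose! hne; linarith)
  rw [chainCost_eq hN.ne']
  nlinarith

lemma div_chainCost_eq {Λ N : ℝ} (Nbar : ℝ) (hN₀ : N ≠ 0) (hN : N ≠ Λ) :
    Nbar * (1 - Λ / N) / (2 * (N + 1) * (1 - Λ / N + Λ)) = Nbar / (2 * chainCost Λ N) := by
  have : N - Λ ≠ 0 := sub_ne_zero.2 hN
  unfold chainCost
  field_simp

lemma one_add_inefficiency_eq {Λ N : ℝ} (hN₀ : N ≠ 0) :
    (N + 1) * (1 + N * (Λ / N) / (1 - Λ / N)) = chainCost Λ N := by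
  unfold chainCost
  rw [mul_div_cancel₀ Λ hN₀, one_sub_div hN₀, div_div_eq_mul_div]

/-- Optimal trade-off between the number of chains and the number of PT copies:
with `k(N+1) = N̄` copies of PT, each with equi-acceptance rejection `r = Λ/N`
and inefficiency `E = N r/(1-r)`, the total round trip rate is
`τ_Λ(N) = N̄ (1-Λ/N) / (2(N+1)(1-Λ/N+Λ))`; over real `N > Λ` it is uniquely
maximized at `N = 2Λ`, with optimal value `(N̄/(2Λ+1)) / (2+4Λ)`. -/
theorem optimal_number_of_chains (Λ Nbar : ℝ) (hΛ : 0 < Λ) (hNbar : 0 < Nbar)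
    (τ : ℝ → ℝ)
    (hτ : ∀ N : ℝ, τ N = Nbar * (1 - Λ / N) / (2 * (N + 1) * (1 - Λ / N + Λ))) :
    (∀ N k r E : ℝ, Λ < N → k * (N + 1) = Nbar → r = Λ / N → E = N * r / (1 - r) →
      k * (1 / (2 * (1 + E))) = τ N) ∧
    deriv τ (2 * Λ) = 0 ∧
    (∀ N : ℝ, Λ < N → N ≠ 2 * Λ → τ N < τ (2 * Λ)) ∧
    τ (2 * Λ) = (Nbar / (2 * Λ + 1)) * (1 / (2 + 4 * Λ)) := by
  have hτ_cost : ∀ N, Λ < N → τ N = Nbar / (2 * chainCost Λ N) := fun N hN =>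
    (hτ N).trans (div_chainCost_eq Nbar (hΛ.trans hN).ne' hN.ne')
  have h2Λ : Λ < 2 * Λ := by linarith
  have hτ_max : ∀ N, Λ < N → N ≠ 2 * Λ → τ N < τ (2 * Λ) := by
    intro N hN hne
    rw [hτ_cost N hN, hτ_cost _ h2Λ, chainCost_two_mul hΛ.ne']
    gcongr
    exact sq_two_mul_add_one_lt_chainCost (by linarith) hN hne
  refine ⟨?_, ?_, hτ_max, ?_⟩
  · rintro N k r E hN hk rfl rfl
    have hN₁ : N + 1 ≠ 0 := by linarith
    rw [hτ_cost N hN, ← one_add_inefficiency_eq (hΛ.trans hN).ne', ← hk]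
    field_simp
  · refine IsLocalMax.deriv_eq_zero ?_
    filter_upwards [Ioi_mem_nhds h2Λ] with N hN
    rcases eq_or_ne N (2 * Λ) with rfl | hne
    · exact le_rfl
    · exact (hτ_max N hN hne).le
  · rw [hτ_cost _ h2Λ, chainCost_two_mul hΛ.ne']
    field_simp
    ring
end

section
/- The DEO transition kernel K^DEO on {0,...,N} × {-1,+1}, defined by moving from (i,ε) to (i+ε reflected at boundaries, with direction kept on success) with probability s^{(i,i+ε)} and to (i,-ε) on rejection, satisfies the skew-detailed balance condition K^DEO((i,ε),(i',ε')) = K^DEO((i',-ε'),(i,-ε)) and leaves the uniform distribution on {0,...,N} × {-1,+1} invariant. -/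
/-!
Skew-detailed balance is a finite case check: an accepted move `(i, ε) → (i + ε, ε)` has
probability `s^{(i, i+ε)}`, the same as the reversed, momentum-flipped move, and every
rejection `(i, ε) → (i, -ε)` is its own skew-reverse. Invariance of the uniform measure
then needs only that the kernel is stochastic: by skew-detailed balance the column sum at
`q` is the row sum at the flipped state `(q.1, -q.2)`, re-indexed by the flip.
-/

/-- The DEO transition kernel on `{0,…,N} × {-1,+1}` (direction encoded by a
`Bool`): from `(i, ε)` the index moves one step in direction `ε` with the
corresponding swap probability keeping its direction, and the direction flips on
rejection or at the boundaries. -/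
def deoKernel (N : ℕ) (s : ℕ → ℝ) : ℕ × Bool → ℕ × Bool → ℝ :=
  fun p q =>
    match p with
    | (i, true) =>
      if i < N then
        (if q = (i + 1, true) then s (i + 1) else 0)
          + (if q = (i, false) then 1 - s (i + 1) else 0)
      else
        if q = (i, false) then 1 else 0
    | (i, false) =>
      if 0 < i then
        (if q = (i - 1, false) then s i else 0)
          + (if q = (i, true) then 1 - s i else 0)
      else
        if q = (i, true) then 1 else 0

theorem Finset.sum_apply_left_eq_sum_apply_right_of_skew {α M : Type*} [AddCommMonoid M]
    {S : Finset α} {σ : α → α} (hσ : Function.Involutive σ) (hS : ∀ p ∈ S, σ p ∈ S)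
    {K : α → α → M} (hK : ∀ p ∈ S, ∀ q ∈ S, K p q = K (σ q) (σ p)) {q : α} (hq : q ∈ S) :
    ∑ p ∈ S, K p q = ∑ p ∈ S, K (σ q) p :=
  calc ∑ p ∈ S, K p q = ∑ p ∈ S, K (σ q) (σ p) := Finset.sum_congr rfl fun p hp => hK p hp q hq
    _ = ∑ p ∈ S, K (σ q) p :=
      Finset.sum_nbij' σ σ hS hS (fun p _ => hσ p) (fun p _ => hσ p) fun _ _ => rfl

namespace deoKernel

variable {N : ℕ} (s : ℕ → ℝ)

theorem skew {i j : ℕ} (hi : i ≤ N) (hj : j ≤ N) (a b : Bool) :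
    deoKernel N s (i, a) (j, b) = deoKernel N s (j, !b) (i, !a) := by
  cases a <;> cases b <;> simp only [deoKernel] <;> split_ifs <;> grind

theorem sum_apply_right {i : ℕ} (hi : i ≤ N) (a : Bool) :
    ∑ q ∈ Finset.range (N + 1) ×ˢ Finset.univ, deoKernel N s (i, a) q = 1 := by
  cases a <;> simp only [deoKernel] <;> split_ifs <;>
    simp [Finset.sum_add_distrib, Finset.sum_ite_eq', Nat.le_succ_of_le hi, *]

theorem sum_apply_left {q : ℕ × Bool} (hq : q.1 ≤ N) :
    ∑ p ∈ Finset.range (N + 1) ×ˢ Finset.univ, deoKernel N s p q = 1 := by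
  have hflip : Function.Involutive fun p : ℕ × Bool => (p.1, !p.2) := fun p => by simp
  rw [Finset.sum_apply_left_eq_sum_apply_right_of_skew hflip (by simp)
      (fun ⟨i, a⟩ hi ⟨j, b⟩ hj => skew s (by simpa [Nat.lt_succ_iff] using hi)
        (by simpa [Nat.lt_succ_iff] using hj) a b)
      (by simpa [Nat.lt_succ_iff] using hq)]
  exact sum_apply_right s hq _

end deoKernel

theorem deo_skew_detailed_balance_general (N : ℕ) (s : ℕ → ℝ) :
    (∀ p q : ℕ × Bool, p.1 ≤ N → q.1 ≤ N →
      deoKernel N s p q = deoKernel N s (q.1, !q.2) (p.1, !p.2)) ∧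
    (∀ q : ℕ × Bool, q.1 ≤ N →
      ∑ i ∈ Finset.range (N + 1),
        (deoKernel N s (i, true) q + deoKernel N s (i, false) q) = 1) := by
  refine ⟨fun ⟨i, a⟩ ⟨j, b⟩ hi hj => deoKernel.skew s hi hj a b, fun q hq => ?_⟩
  simpa [Finset.sum_product, add_comm] using deoKernel.sum_apply_left s hq

/-- The DEO kernel satisfies the skew-detailed balance condition
`K((i,ε),(i',ε')) = K((i',-ε'),(i,-ε))` and leaves the uniform distribution on
`{0,…,N} × {-1,+1}` invariant. -/
theorem deo_skew_detailed_balance (N : ℕ) (s : ℕ → ℝ)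
    (hs : ∀ i, 1 ≤ i → i ≤ N → 0 ≤ s i ∧ s i ≤ 1) :
    (∀ p q : ℕ × Bool, p.1 ≤ N → q.1 ≤ N →
      deoKernel N s p q = deoKernel N s (q.1, !q.2) (p.1, !p.2)) ∧
    (∀ q : ℕ × Bool, q.1 ≤ N →
      ∑ i ∈ Finset.range (N + 1),
        (deoKernel N s (i, true) q + deoKernel N s (i, false) q) = 1) :=
  deo_skew_detailed_balance_general N s
end
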